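/- Let $(V,E)$ be a rooted directed tree, $\mu$ a weight, $1<p<\infty$, and suppose the backward shift $B$ is bounded on $X=\ell^p(V,\mu)$ with $\|B\|\leq C$, $C\geq 2$. If there exist an increasing sequence $(n_k)_{k\geq1}$ of positive integers and a vertex $v\in V$ such that $(\sum_{u\in\mathrm{Chi}^{n_k+k}(v)}|\mu_u|^{-p^*})^{-1/p^*}<C^{-2k}$ for all $k$, then for every $l\in\mathbb{N}_0$ one has $\sum_{u\in\mathrm{Chi}^{n_k+l}(v)}|\mu_u|^{-p^*}\to+\infty$ as $k\to\infty$. -/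

import Mathlib

open scoped ENNReal NNReal

/-- A directed tree: a countable connected directed graph without circuits in
which every vertex has at most one parent. -/
structure DirTree {V : Type*} (E : V → V → Prop) : Prop where
  ne : ∀ u v : V, E u v → u ≠ v
  connected : ∀ u v : V, u ≠ v → ∃ n : ℕ, ∃ w : Fin (n + 2) → V,
    w 0 = u ∧ w (Fin.last (n + 1)) = v ∧
    ∀ i : Fin (n + 1), E (w i.castSucc) (w i.succ) ∨ E (w i.succ) (w i.castSucc)
  noCircuit : ∀ n : ℕ, ∀ w : Fin (n + 2) → V, Function.Injective w →
    ¬ ∀ i : Fin (n + 2), E (w i) (w (i + 1))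
  uniqueParent : ∀ v u₁ u₂ : V, E u₁ v → E u₂ v → u₁ = u₂

/-- The backward shift associated with an edge relation:
`(Bf)(v) = ∑_{u ∈ Chi(v)} f(u)`. -/
noncomputable def Bop {V 𝕜 : Type*} [RCLike 𝕜] (E : V → V → Prop) (f : V → 𝕜) : V → 𝕜 :=
  fun v => ∑' u : {u // E v u}, f u

/-- The weighted `ℓ^p`-"norm" `(∑_v |f(v) μ(v)|^p)^{1/p}`, valued in `ℝ≥0∞`. -/
noncomputable def pnorm {V 𝕜 : Type*} [RCLike 𝕜] (μ : V → 𝕜) (p : ℝ) (f : V → 𝕜) : ℝ≥0∞ :=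
  (∑' v, (‖f v * μ v‖₊ : ℝ≥0∞) ^ p) ^ (1 / p)


/-- `chiIter E n v` is `Chi^n(v)`, the set of `n`-th generation descendants of `v`. -/
def chiIter {V : Type*} (E : V → V → Prop) : ℕ → V → Set V
  | 0, v => {v}
  | n + 1, v => {u | ∃ w, E v w ∧ u ∈ chiIter E n w}

/-! For `σ_m = ∑_{u ∈ Chi^m(v)} |μ_u|^{-p*}`, testing `‖Bf‖ ≤ C ‖f‖` on the equality case
`f = |μ|^{-p*}` of Hölder's inequality, supported on finitely many vertices of `Chi^{m+1}(v)`,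
and pairing `Bf` with `|μ|^{-1}` on `Chi^m(v)` gives `σ_{m+1} ≤ C^{p*} σ_m`. Hence
`σ_{n_k+k} ≤ C^{p*(k-l)} σ_{n_k+l}`, while the hypothesis says `σ_{n_k+k} > C^{2kp*}`;
so `σ_{n_k+l} ≥ C^{p*(k+l)} ≥ 2^k`. -/

lemma ENNReal.tsum_mul_le_Lp_mul_Lq {ι : Type*} (f g : ι → ℝ≥0∞) {p q : ℝ}
    (hpq : p.HolderConjugate q) :
    ∑' i, f i * g i ≤ (∑' i, f i ^ p) ^ (1 / p) * (∑' i, g i ^ q) ^ (1 / q) := by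
  rw [ENNReal.tsum_eq_iSup_sum]
  refine iSup_le fun s => (ENNReal.inner_le_Lp_mul_Lq s f g hpq).trans ?_
  exact mul_le_mul' (ENNReal.rpow_le_rpow (ENNReal.sum_le_tsum s) hpq.one_div_nonneg)
    (ENNReal.rpow_le_rpow (ENNReal.sum_le_tsum s) hpq.symm.one_div_nonneg)

lemma ENNReal.le_rpow_mul_of_le_mul_rpow_mul_rpow {p q : ℝ} (hpq : p.HolderConjugate q)
    {a c s : ℝ≥0∞} (ha : a ≠ ⊤) (h : a ≤ c * a ^ (1 / p) * s ^ (1 / q)) : a ≤ c ^ q * s := by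
  rcases eq_or_ne a 0 with rfl | ha₀
  · exact zero_le
  have hsplit : a = a ^ (1 / p) * a ^ (1 / q) := by
    rw [← ENNReal.rpow_add _ _ ha₀ ha, one_div, one_div, hpq.inv_add_inv_eq_one,
      ENNReal.rpow_one]
  have hroot : a ^ (1 / q) ≤ c * s ^ (1 / q) := by
    refine (ENNReal.mul_le_mul_iff_right (a := a ^ (1 / p)) ?_ ?_).1 ?_
    · simp [ENNReal.rpow_eq_zero_iff, ha₀, ha]
    · exact ENNReal.rpow_ne_top_of_nonneg hpq.one_div_nonneg ha
    · rw [← hsplit, ← mul_assoc, mul_comm (a ^ (1 / p))]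
      exact h
  have hq := hpq.symm.pos
  calc a = (a ^ (1 / q)) ^ q := by
        rw [← ENNReal.rpow_mul, one_div_mul_cancel hq.ne', ENNReal.rpow_one]
    _ ≤ (c * s ^ (1 / q)) ^ q := ENNReal.rpow_le_rpow hroot hq.le
    _ = c ^ q * s := by
      rw [ENNReal.mul_rpow_of_nonneg _ _ hq.le, ← ENNReal.rpow_mul, one_div_mul_cancel hq.ne',
        ENNReal.rpow_one]

lemma ENNReal.rpow_rpow_lt_of_rpow_neg_one_div_lt {x y : ℝ≥0∞} {q r : ℝ} (hq : 0 < q)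
    (h : x ^ (-(1 / q)) < y ^ (-r)) : (y ^ q) ^ r < x := by
  rw [ENNReal.rpow_neg, ENNReal.rpow_neg, ENNReal.inv_lt_inv] at h
  calc (y ^ q) ^ r = (y ^ r) ^ q := by rw [← ENNReal.rpow_mul, ← ENNReal.rpow_mul, mul_comm]
    _ < (x ^ (1 / q)) ^ q := ENNReal.rpow_lt_rpow h hq
    _ = x := by rw [← ENNReal.rpow_mul, one_div_mul_cancel hq.ne', ENNReal.rpow_one]

lemma le_pow_mul_of_le_mul_succ {M : Type*} [CommMonoid M] [Preorder M] [MulLeftMono M]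
    {u : ℕ → M} {c : M} (h : ∀ m, u (m + 1) ≤ c * u m) (m j : ℕ) : u (m + j) ≤ c ^ j * u m := by
  induction j with
  | zero => simp
  | succ j ih =>
    calc u (m + (j + 1)) ≤ c * u (m + j) := h (m + j)
      _ ≤ c * (c ^ j * u m) := mul_le_mul_right ih c
      _ = c ^ (j + 1) * u m := by rw [pow_succ', mul_assoc]

lemma mem_chiIter_succ_iff_exists_parent {V : Type*} {E : V → V → Prop} {m : ℕ} {v u : V} :
    u ∈ chiIter E (m + 1) v ↔ ∃ w ∈ chiIter E m v, E w u := by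
  induction m generalizing v with
  | zero => simp [chiIter]
  | succ m ih =>
    simp only [chiIter, Set.mem_ofPred_eq] at ih ⊢
    constructor
    · rintro ⟨x, hvx, hu⟩
      obtain ⟨w, hw, hwu⟩ := ih.1 hu
      exact ⟨w, ⟨x, hvx, hw⟩, hwu⟩
    · rintro ⟨w, ⟨x, hvx, hw⟩, hwu⟩
      exact ⟨x, hvx, ih.2 ⟨w, hw, hwu⟩⟩

lemma Bop_eq_sum_filter_of_support_subset {V 𝕜 : Type*} [RCLike 𝕜] {E : V → V → Prop}
    [DecidableRel E] {f : V → 𝕜} {F : Finset V} (hf : ∀ u ∉ F, f u = 0) (w : V) :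
    Bop E f w = ∑ u ∈ F with E w u, f u := by
  change ∑' u : {u | E w u}, f u = _
  rw [tsum_subtype {u | E w u} f, tsum_eq_sum (s := F) fun u hu => by
    simp [Set.indicator_apply, hf u hu], Finset.sum_filter]
  simp [Set.indicator_apply]

lemma sum_le_tsum_sum_filter_of_exists_parent {V : Type*} {E : V → V → Prop} [DecidableRel E]
    {s : Set V} {F : Finset V} (hF : ∀ u ∈ F, ∃ w ∈ s, E w u) (a : V → ℝ≥0∞) :
    ∑ u ∈ F, a u ≤ ∑' w : s, ∑ u ∈ F with E w u, a u := by
  calc ∑ u ∈ F, a u ≤ ∑ u ∈ F, ∑' w : s, if E w u then a u else 0 := by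
        gcongr with u hu
        obtain ⟨w, hws, hwu⟩ := hF u hu
        simpa [hwu] using ENNReal.le_tsum (f := fun w : s => if E w u then a u else 0) ⟨w, hws⟩
    _ = ∑' w : s, ∑ u ∈ F with E w u, a u := by
        simp only [Finset.sum_filter]
        exact (Summable.tsum_finsetSum fun _ _ => ENNReal.summable).symm

section WeightedLp

variable {V 𝕜 : Type*} [RCLike 𝕜] {μ : V → 𝕜} {p q : ℝ}

lemma tsum_le_Lp_weighted_mul_Lq_inv_weight (hμ : ∀ w, μ w ≠ 0) (hpq : p.HolderConjugate q)
    (s : Set V) (g : V → ℝ≥0∞) :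
    ∑' w : s, g w ≤ (∑' w : s, (g w * ‖μ w‖₊) ^ p) ^ (1 / p) *
      (∑' w : s, (‖μ w‖₊ : ℝ≥0∞) ^ (-q)) ^ (1 / q) := by
  have hμ' : ∀ w, (‖μ w‖₊ : ℝ≥0∞) ≠ 0 := by simpa using hμ
  calc ∑' w : s, g w = ∑' w : s, g w * ‖μ w‖₊ * (‖μ w‖₊ : ℝ≥0∞) ^ (-1 : ℝ) := by
        refine tsum_congr fun w => ?_
        rw [ENNReal.rpow_neg_one, mul_assoc, ENNReal.mul_inv_cancel (hμ' w) ENNReal.coe_ne_top,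
          mul_one]
    _ ≤ _ := ENNReal.tsum_mul_le_Lp_mul_Lq _ _ hpq
    _ = _ := by simp_rw [← ENNReal.rpow_mul, neg_one_mul]

lemma pnorm_subtype_le (hp : 0 ≤ p) (f : V → 𝕜) (s : Set V) :
    (∑' w : s, (‖f w * μ w‖₊ : ℝ≥0∞) ^ p) ^ (1 / p) ≤ pnorm μ p f := by
  unfold pnorm
  gcongr
  exact ENNReal.tsum_comp_le_tsum_of_injective Subtype.val_injective
    fun w => (‖f w * μ w‖₊ : ℝ≥0∞) ^ p

noncomputable def holderTestFn (μ : V → 𝕜) (q : ℝ) (F : Finset V) : V → 𝕜 :=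
  (F : Set V).indicator fun u => algebraMap ℝ≥0 𝕜 (‖μ u‖₊ ^ (-q))

lemma pnorm_holderTestFn (hμ : ∀ w, μ w ≠ 0) (hpq : p.HolderConjugate q) (F : Finset V) :
    pnorm μ p (holderTestFn μ q F) = (∑ u ∈ F, (‖μ u‖₊ : ℝ≥0∞) ^ (-q)) ^ (1 / p) := by
  unfold pnorm
  congr 1
  rw [tsum_eq_sum (s := F) fun u hu => by
    simp [holderTestFn, Set.indicator_of_notMem (Finset.mem_coe.not.2 hu),
      ENNReal.zero_rpow_of_pos hpq.pos]]
  refine Finset.sum_congr rfl fun u hu => ?_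
  have hμu : (‖μ u‖₊ : ℝ≥0∞) ≠ 0 := by simpa using hμ u
  -- `(1 - q) p = -q` is the relation `p + q = p q` between conjugate exponents
  have hexp : (-q + 1) * p = -q := by linarith [hpq.mul_eq_add]
  rw [holderTestFn, Set.indicator_of_mem (Finset.mem_coe.2 hu), nnnorm_mul,
    nnnorm_algebraMap_nnreal, ENNReal.coe_mul,
    ENNReal.coe_rpow_of_ne_zero (nnnorm_ne_zero_iff.2 (hμ u))]
  nth_rw 2 [← ENNReal.rpow_one (‖μ u‖₊ : ℝ≥0∞)]
  rw [← ENNReal.rpow_add _ _ hμu ENNReal.coe_ne_top, ← ENNReal.rpow_mul, hexp]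

lemma coe_nnnorm_Bop_holderTestFn (hμ : ∀ w, μ w ≠ 0) {E : V → V → Prop} [DecidableRel E]
    (F : Finset V) (w : V) :
    (‖Bop E (holderTestFn μ q F) w‖₊ : ℝ≥0∞) = ∑ u ∈ F with E w u, (‖μ u‖₊ : ℝ≥0∞) ^ (-q) := by
  have hout : ∀ u ∉ F, holderTestFn μ q F u = 0 := fun u hu =>
    Set.indicator_of_notMem (Finset.mem_coe.not.2 hu) _
  have hin : ∀ u ∈ F.filter (E w), holderTestFn μ q F u = algebraMap ℝ≥0 𝕜 (‖μ u‖₊ ^ (-q)) :=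
    fun u hu => Set.indicator_of_mem (Finset.mem_coe.2 (Finset.mem_filter.1 hu).1) _
  rw [Bop_eq_sum_filter_of_support_subset hout, Finset.sum_congr rfl hin, ← map_sum,
    nnnorm_algebraMap_nnreal, ENNReal.ofNNReal_finsetSum]
  exact Finset.sum_congr rfl fun u _ =>
    ENNReal.coe_rpow_of_ne_zero (nnnorm_ne_zero_iff.2 (hμ u)) _

end WeightedLp

section BoundedShift

variable {V 𝕜 : Type*} [RCLike 𝕜] {E : V → V → Prop} {μ : V → 𝕜} {p q : ℝ} {C : ℝ≥0∞}

theorem sum_rpow_neg_le_of_exists_parent (hμ : ∀ w, μ w ≠ 0) (hpq : p.HolderConjugate q)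
    (hB : ∀ f : V → 𝕜, pnorm μ p (Bop E f) ≤ C * pnorm μ p f) {s : Set V} {F : Finset V}
    (hF : ∀ u ∈ F, ∃ w ∈ s, E w u) :
    ∑ u ∈ F, (‖μ u‖₊ : ℝ≥0∞) ^ (-q) ≤ C ^ q * ∑' w : s, (‖μ w‖₊ : ℝ≥0∞) ^ (-q) := by
  classical
  set f := holderTestFn μ q F
  refine ENNReal.le_rpow_mul_of_le_mul_rpow_mul_rpow hpq (ENNReal.sum_ne_top.2 fun u _ => by
    rw [← ENNReal.coe_rpow_of_ne_zero (nnnorm_ne_zero_iff.2 (hμ u))]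
    exact ENNReal.coe_ne_top) ?_
  calc ∑ u ∈ F, (‖μ u‖₊ : ℝ≥0∞) ^ (-q)
      ≤ ∑' w : s, ∑ u ∈ F with E w u, (‖μ u‖₊ : ℝ≥0∞) ^ (-q) :=
        sum_le_tsum_sum_filter_of_exists_parent hF _
    _ = ∑' w : s, (‖Bop E f w‖₊ : ℝ≥0∞) :=
        tsum_congr fun w => (coe_nnnorm_Bop_holderTestFn hμ F w).symm
    _ ≤ (∑' w : s, (‖Bop E f w * μ w‖₊ : ℝ≥0∞) ^ p) ^ (1 / p) *
          (∑' w : s, (‖μ w‖₊ : ℝ≥0∞) ^ (-q)) ^ (1 / q) := by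
        simpa only [nnnorm_mul, ENNReal.coe_mul] using
          tsum_le_Lp_weighted_mul_Lq_inv_weight hμ hpq s fun w => ‖Bop E f w‖₊
    _ ≤ C * pnorm μ p f * (∑' w : s, (‖μ w‖₊ : ℝ≥0∞) ^ (-q)) ^ (1 / q) := by
        gcongr
        exact (pnorm_subtype_le hpq.nonneg _ s).trans (hB f)
    _ = _ := by rw [pnorm_holderTestFn hμ hpq]

theorem tsum_rpow_neg_le_of_exists_parent (hμ : ∀ w, μ w ≠ 0) (hpq : p.HolderConjugate q)
    (hB : ∀ f : V → 𝕜, pnorm μ p (Bop E f) ≤ C * pnorm μ p f) {s t : Set V}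
    (ht : ∀ u ∈ t, ∃ w ∈ s, E w u) :
    ∑' u : t, (‖μ u‖₊ : ℝ≥0∞) ^ (-q) ≤ C ^ q * ∑' w : s, (‖μ w‖₊ : ℝ≥0∞) ^ (-q) := by
  rw [ENNReal.tsum_eq_iSup_sum]
  refine iSup_le fun F => ?_
  have hmap := Finset.sum_map F (Function.Embedding.subtype (· ∈ t))
    fun u => (‖μ u‖₊ : ℝ≥0∞) ^ (-q)
  rw [Function.Embedding.coe_subtype] at hmap
  rw [← hmap]
  refine sum_rpow_neg_le_of_exists_parent hμ hpq hB fun u hu => ?_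
  obtain ⟨x, -, rfl⟩ := Finset.mem_map.1 hu
  exact ht x x.2

end BoundedShift

open Filter

theorem stmt12_general {V 𝕜 : Type*} [RCLike 𝕜]
    {E : V → V → Prop} (μ : V → 𝕜) (hμ : ∀ w, μ w ≠ 0)
    (p : ℝ) (hp : 1 < p)
    (C : ℝ≥0∞) (hC2 : 2 ≤ C)
    (hB : ∀ f : V → 𝕜, pnorm μ p (Bop E f) ≤ C * pnorm μ p f)
    (n : ℕ → ℕ)
    (v : V)
    (hsmall : ∀ k : ℕ, 1 ≤ k →
      (∑' u : chiIter E (n k + k) v, (‖μ u.1‖₊ : ℝ≥0∞) ^ (-(p / (p - 1))))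
          ^ (-(1 / (p / (p - 1)))) < C ^ (-(2 * (k : ℝ)))) :
    ∀ l : ℕ, Tendsto (fun k => ∑' u : chiIter E (n k + l) v,
        (‖μ u.1‖₊ : ℝ≥0∞) ^ (-(p / (p - 1)))) atTop (nhds ⊤) := by
  intro l
  have hpq : p.HolderConjugate (p / (p - 1)) := .conjExponent hp
  set q := p / (p - 1)
  set S : ℕ → ℝ≥0∞ := fun m => ∑' u : chiIter E m v, (‖μ u.1‖₊ : ℝ≥0∞) ^ (-q)
  set D := C ^ q
  have hD : 2 ≤ D := hC2.trans <| by
    simpa using ENNReal.rpow_le_rpow_of_exponent_le (one_le_two.trans hC2) hpq.symm.lt.le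
  have hstep : ∀ m, S (m + 1) ≤ D * S m := fun m =>
    tsum_rpow_neg_le_of_exists_parent hμ hpq hB fun _ => mem_chiIter_succ_iff_exists_parent.1
  have hlarge : ∀ k, 1 ≤ k → D ^ (2 * k) < S (n k + k) := fun k hk => by
    simpa [← ENNReal.rpow_natCast] using
      ENNReal.rpow_rpow_lt_of_rpow_neg_one_div_lt hpq.symm.pos (hsmall k hk)
  have hlower : ∀ k, max l 1 ≤ k → D ^ k ≤ S (n k + l) := by
    intro k hk
    have hmul : D ^ (k - l) * D ^ (k + l) < D ^ (k - l) * S (n k + l) :=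
      calc D ^ (k - l) * D ^ (k + l) = D ^ (2 * k) := by rw [← pow_add]; congr 1; omega
        _ < S (n k + k) := hlarge k (by omega)
        _ = S (n k + l + (k - l)) := by congr 1; omega
        _ ≤ D ^ (k - l) * S (n k + l) := le_pow_mul_of_le_mul_succ hstep _ _
    exact (pow_le_pow_right₀ (one_le_two.trans hD) (by omega)).trans
      (lt_of_mul_lt_mul_left' hmul).le
  refine tendsto_nhds_top_mono
    (ENNReal.tendsto_pow_atTop_nhds_top_iff.2 (ENNReal.one_lt_two.trans_le hD)) ?_
  filter_upwards [eventually_ge_atTop (max l 1)] with k hk using hlower k hk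

/-- If `‖B‖ ≤ C` with `C ≥ 2` and `(∑_{u ∈ Chi^{n_k+k}(v)} |μ_u|^{-p*})^{-1/p*} < C^{-2k}`
for all `k ≥ 1`, then for every `l` one has `∑_{u ∈ Chi^{n_k+l}(v)} |μ_u|^{-p*} → ∞`. -/
theorem stmt12 {V 𝕜 : Type*} [RCLike 𝕜] [Countable V] [Nonempty V]
    {E : V → V → Prop} (hT : DirTree E) (μ : V → 𝕜) (hμ : ∀ w, μ w ≠ 0)
    (o : V) (ho : ∀ u, ¬ E u o) (hreach : ∀ w : V, ∃ m : ℕ, w ∈ chiIter E m o)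
    (p : ℝ) (hp : 1 < p)
    (C : ℝ≥0∞) (hC2 : 2 ≤ C) (hCtop : C ≠ ⊤)
    (hB : ∀ f : V → 𝕜, pnorm μ p (Bop E f) ≤ C * pnorm μ p f)
    (n : ℕ → ℕ) (hmono : ∀ k, 1 ≤ k → n k < n (k + 1)) (hpos : ∀ k, 1 ≤ k → 0 < n k)
    (v : V)
    (hsmall : ∀ k : ℕ, 1 ≤ k →
      (∑' u : chiIter E (n k + k) v, (‖μ u.1‖₊ : ℝ≥0∞) ^ (-(p / (p - 1))))
          ^ (-(1 / (p / (p - 1)))) < C ^ (-(2 * (k : ℝ)))) :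
    ∀ l : ℕ, Tendsto (fun k => ∑' u : chiIter E (n k + l) v,
        (‖μ u.1‖₊ : ℝ≥0∞) ^ (-(p / (p - 1)))) atTop (nhds ⊤) :=
  stmt12_general μ hμ p hp C hC2 hB n v hsmall
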